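/- Let N ≥ 4 and let H be the N×N real symmetric matrix with entries H_{ij} = −cos(2π(i−j)/N) − 1/(2 − 2cos(2π(i−j)/N)) for i ≠ j and H_{ii} = −∑_{j≠i} H_{ij}. For 0 ≤ j ≤ N−1 let v_j ∈ ℂ^N be the vector with components (v_j)_k = exp(2πi·jk/N), k = 0,…,N−1. Then v_j is an eigenvector of H (viewed as a complex matrix) with eigenvalue λ_j, where λ_0 = 0, λ_1 = λ_{N−1} = −1/2, and λ_j = b(j,N) := (1/2)·∑_{k=1}^{N−1} (1 − cos(2πjk/N))/(1 − cos(2πk/N)) > 0 for 2 ≤ j ≤ N−2. In particular H has exactly one zero eigenvalue, the eigenvalue −1/2 with multiplicity two, and N−3 strictly positive eigenvalues. -/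

import Mathlib

open Real Matrix Finset

/-!
For `i ≠ k` the entry `H i k` depends only on `i - k` modulo `N`, through the even, `N`-periodic
weight `w = ngonWeight N`, and the rows of `H` sum to zero. Hence every Fourier vector
`v_j = (ζ^{jk})_k` is an eigenvector, with eigenvalue `∑_m w(m) (ζ^{jm} - 1)`; this is real
because `w` is even, so it equals `∑_m w(m) (cos (jθ_m) - 1)` with `θ_m = 2πm/N`. Writing
`w(m) (cos jθ - 1) = cos θ (1 - cos jθ) + (1 - cos jθ) / (2 (1 - cos θ))`, the first part sums,
by orthogonality of the `N`-th roots of unity, to `-(N/2) ([j = 1] + [j = N - 1])`, and the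
second is `b(j)`. Finally `b(1) = b(N - 1) = (N - 1)/2` and `b(j) > 0` for `0 < j < N`.
-/

open Function

theorem Function.Periodic.apply_val_fin_sub {α : Type*} {N : ℕ} {g : ℝ → α}
    (hg : Periodic g N) (i k : Fin N) : g ((i - k : Fin N) : ℕ) = g ((i : ℕ) - (k : ℕ)) := by
  rcases le_or_gt k i with h | h
  · rw [Fin.coe_sub_iff_le.2 h, Nat.cast_sub (Fin.le_def.1 h)]
  · rw [Fin.coe_sub_iff_lt.2 h, Nat.cast_sub (by omega), Nat.cast_add, add_sub_assoc, add_comm,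
      hg]

theorem Function.Periodic.apply_val_fin_neg {α : Type*} {N : ℕ} [NeZero N] {g : ℝ → α}
    (hg : Periodic g N) (m : Fin N) : g ((-m : Fin N) : ℕ) = g (-((m : ℕ) : ℝ)) := by
  rw [← zero_sub, hg.apply_val_fin_sub]
  simp

theorem pow_val_add_of_pow_eq_one {M : Type*} [Monoid M] {N : ℕ} {ζ : M} (hζ : ζ ^ N = 1)
    (a b : Fin N) : ζ ^ (a + b : Fin N).val = ζ ^ a.val * ζ ^ b.val := by
  rw [Fin.val_add, ← pow_eq_pow_mod _ hζ, pow_add]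

theorem mulVec_pow_val_of_offDiag_eq {R : Type*} [CommRing R] {N : ℕ} [NeZero N]
    (A : Matrix (Fin N) (Fin N) R) (c : Fin N → R) (hoff : ∀ i k, i ≠ k → A i k = c (k - i))
    (hrow : ∀ i, ∑ k, A i k = 0) {ζ : R} (hζ : ζ ^ N = 1) :
    A *ᵥ (fun k => ζ ^ k.val) = (∑ m, c m * (ζ ^ m.val - 1)) • fun k => ζ ^ k.val := by
  ext i
  -- subtracting `ζ ^ i` (allowed since the row sums vanish) kills the diagonal entry
  have hentry :
      ∀ k, A i k * (ζ ^ k.val - ζ ^ i.val) = c (k - i) * (ζ ^ k.val - ζ ^ i.val) := by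
    intro k
    rcases eq_or_ne i k with rfl | h
    · simp
    · rw [hoff i k h]
  calc (A *ᵥ fun k => ζ ^ k.val) i = ∑ k, A i k * (ζ ^ k.val - ζ ^ i.val) := by
        simp only [mulVec, dotProduct, mul_sub, sum_sub_distrib, ← sum_mul, hrow, zero_mul,
          sub_zero]
    _ = ∑ m, c m * (ζ ^ (i + m).val - ζ ^ i.val) := by
        simp only [hentry]
        exact Fintype.sum_equiv (Equiv.subRight i) _ _ fun k => by simp
    _ = ((∑ m, c m * (ζ ^ m.val - 1)) • fun k : Fin N => ζ ^ k.val) i := by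
        simp only [pow_val_add_of_pow_eq_one hζ, Pi.smul_apply, smul_eq_mul, sum_mul]
        exact sum_congr rfl fun m _ => by ring

theorem sum_fin_cos_two_pi_int_mul_div (N : ℕ) [NeZero N] (t : ℤ) :
    ∑ m : Fin N, cos (2 * π * t * m / N) = if (N : ℤ) ∣ t then (N : ℝ) else 0 := by
  have hζ := Complex.isPrimitiveRoot_exp N (NeZero.ne N)
  obtain ⟨ξ, hξ⟩ : ∃ ξ, ξ = Complex.exp (2 * π * Complex.I / N) ^ t := ⟨_, rfl⟩
  have hcos : ∀ m : ℕ, cos (2 * π * t * m / N) = (ξ ^ m).re := by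
    intro m
    rw [hξ, ← Complex.exp_int_mul, ← Complex.exp_nat_mul, ← Complex.exp_ofReal_mul_I_re]
    congr 2
    push_cast
    ring
  rw [Fin.sum_univ_eq_sum_range (fun m => cos (2 * π * t * m / N)),
    sum_congr rfl fun m _ => hcos m, ← Complex.re_sum]
  split_ifs with h
  · simp [hξ, (hζ.zpow_eq_one_iff_dvd t).2 h]
  · have hξN : ξ ^ N = 1 := by
      rw [hξ, ← zpow_natCast, ← _root_.zpow_mul, mul_comm t, _root_.zpow_mul, zpow_natCast,
        hζ.pow_eq_one, _root_.one_zpow]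
    rw [geom_sum_eq (hξ ▸ mt (hζ.zpow_eq_one_iff_dvd t).1 h), hξN]
    simp

theorem Int.dvd_sub_iff_eq_of_abs_sub_lt {n a b : ℤ} (h : |a - b| < n) : n ∣ a - b ↔ a = b :=
  ⟨fun hd => sub_eq_zero.1 (Int.eq_zero_of_abs_lt_dvd hd h), fun e => by simp [e]⟩

theorem cos_two_pi_mul_div_lt_one {N k : ℕ} (hk : 0 < k) (hkN : k < N) :
    cos (2 * π * k / N) < 1 := by
  have hN : (0 : ℝ) < N := by exact_mod_cast hk.trans hkN
  have hkN' : (k : ℝ) < N := by exact_mod_cast hkN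
  have hx0 : 0 < 2 * π * k / N := by positivity
  have hx : 2 * π * k / N < 2 * π := by
    rw [div_lt_iff₀ hN]
    nlinarith [pi_pos]
  exact (cos_le_one _).lt_of_ne fun h => hx0.ne' ((cos_eq_one_iff_of_lt_of_lt (by linarith) hx).1 h)

theorem card_filter_univ_fin (N : ℕ) (p : ℕ → Prop) [DecidablePred p] :
    #{j : Fin N | p j} = #{n ∈ range N | p n} := by
  rw [card_filter, card_filter, Fin.sum_univ_eq_sum_range (fun n => if p n then 1 else 0)]

noncomputable def ngonWeight (N : ℕ) (x : ℝ) : ℝ :=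
  -cos (2 * π * x / N) - 1 / (2 - 2 * cos (2 * π * x / N))

noncomputable def ngonFourierVec (N j : ℕ) : Fin N → ℂ :=
  fun k => Complex.exp (2 * π * Complex.I * j * (k : ℕ) / N)

/-- The `m = 0` term vanishes, whatever the junk value `ngonWeight N 0`. -/
noncomputable def ngonSymbol (N j : ℕ) : ℝ :=
  ∑ m : Fin N, ngonWeight N (m : ℕ) * (cos (2 * π * j * (m : ℕ) / N) - 1)

noncomputable def ngonRatioSum (N j : ℕ) : ℝ :=
  ∑ k ∈ Icc 1 (N - 1), (1 - cos (2 * π * j * k / N)) / (1 - cos (2 * π * k / N))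

theorem ngonWeight_neg (N : ℕ) (x : ℝ) : ngonWeight N (-x) = ngonWeight N x := by
  simp only [ngonWeight, mul_neg, neg_div, cos_neg]

section

variable (N : ℕ) [NeZero N]

theorem ngonWeight_periodic : Periodic (ngonWeight N) N := by
  intro x
  have hN : (N : ℝ) ≠ 0 := Nat.cast_ne_zero.2 (NeZero.ne N)
  rw [ngonWeight, ngonWeight, show 2 * π * (x + N) / N = 2 * π * x / N + 2 * π by field_simp,
    cos_add_two_pi]

theorem sin_two_pi_nat_mul_div_periodic (j : ℕ) :
    Periodic (fun x : ℝ => sin (2 * π * j * x / N)) N := by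
  intro x
  have hN : (N : ℝ) ≠ 0 := Nat.cast_ne_zero.2 (NeZero.ne N)
  simp only
  rw [show 2 * π * j * (x + N) / N = 2 * π * j * x / N + j * (2 * π) by field_simp,
    sin_add_nat_mul_two_pi]

theorem sum_ngonWeight_mul_sin_eq_zero (j : ℕ) :
    ∑ m : Fin N, ngonWeight N (m : ℕ) * sin (2 * π * j * (m : ℕ) / N) = 0 := by
  have hodd := Fintype.sum_equiv (Equiv.neg (Fin N))
    (fun m : Fin N => ngonWeight N (m : ℕ) * sin (2 * π * j * (m : ℕ) / N))
    (fun m : Fin N => -(ngonWeight N (m : ℕ) * sin (2 * π * j * (m : ℕ) / N))) fun m => by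
      rw [Equiv.neg_apply, (ngonWeight_periodic N).apply_val_fin_neg,
        (sin_two_pi_nat_mul_div_periodic N j).apply_val_fin_neg]
      simp only [ngonWeight_neg, mul_neg, neg_div, sin_neg, neg_neg]
  rw [sum_neg_distrib] at hodd
  linarith

theorem sum_ngonWeight_mul_exp (j : ℕ) :
    ∑ m : Fin N, (ngonWeight N (m : ℕ) : ℂ)
        * (Complex.exp (2 * π * Complex.I * j / N) ^ (m : ℕ) - 1) = ngonSymbol N j := by
  have hterm : ∀ m : ℕ,
      (ngonWeight N m : ℂ) * (Complex.exp (2 * π * Complex.I * j / N) ^ m - 1)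
        = ((ngonWeight N m * (cos (2 * π * j * m / N) - 1) : ℝ) : ℂ)
          + ((ngonWeight N m * sin (2 * π * j * m / N) : ℝ) : ℂ) * Complex.I := by
    intro m
    have harg : (m : ℂ) * (2 * π * Complex.I * j / N)
        = ((2 * π * j * m / N : ℝ) : ℂ) * Complex.I := by
      push_cast; ring
    rw [← Complex.exp_nat_mul, harg, Complex.exp_mul_I, ← Complex.ofReal_cos,
      ← Complex.ofReal_sin]
    push_cast
    ring
  rw [sum_congr rfl fun (m : Fin N) _ => hterm m, sum_add_distrib, ← sum_mul,
    ← Complex.ofReal_sum, ← Complex.ofReal_sum, sum_ngonWeight_mul_sin_eq_zero, ngonSymbol]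
  simp

/-- The `m = 0` term on the left is the junk quotient `0 / 0 = 0`. -/
theorem sum_fin_ratio_eq_ngonRatioSum (j : ℕ) :
    ∑ m : Fin N, (1 - cos (2 * π * j * (m : ℕ) / N)) / (1 - cos (2 * π * (m : ℕ) / N))
      = ngonRatioSum N j := by
  rw [Fin.sum_univ_eq_sum_range
      (fun m => (1 - cos (2 * π * j * m / N)) / (1 - cos (2 * π * m / N))),
    sum_range_eq_add_Ico _ (NeZero.pos N), ngonRatioSum,
    show Icc 1 (N - 1) = Ico 1 N by ext; simp only [mem_Icc, mem_Ico]; omega]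
  simp

theorem ngon_hessian_mulVec (H : Matrix (Fin N) (Fin N) ℝ)
    (hoff : ∀ i k : Fin N, i ≠ k → H i k = ngonWeight N ((i : ℕ) - (k : ℕ)))
    (hdiag : ∀ i : Fin N, H i i = - ∑ k ∈ univ.erase i, H i k) (j : ℕ) :
    H.map (fun x : ℝ => (x : ℂ)) *ᵥ ngonFourierVec N j
      = (ngonSymbol N j : ℂ) • ngonFourierVec N j := by
  have hN : (N : ℂ) ≠ 0 := Nat.cast_ne_zero.2 (NeZero.ne N)
  have hζ : Complex.exp (2 * π * Complex.I * j / N) ^ N = 1 := by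
    rw [← Complex.exp_nat_mul,
      show (N : ℂ) * (2 * π * Complex.I * j / N) = j * (2 * π * Complex.I) by field_simp]
    exact Complex.exp_nat_mul_two_pi_mul_I j
  have hv : ngonFourierVec N j
      = fun k : Fin N => Complex.exp (2 * π * Complex.I * j / N) ^ (k : ℕ) :=
    funext fun k => by rw [ngonFourierVec, ← Complex.exp_nat_mul]; ring_nf
  rw [hv, mulVec_pow_val_of_offDiag_eq _ (fun m => (ngonWeight N (m : ℕ) : ℂ)) _ _ hζ,
    sum_ngonWeight_mul_exp]
  · intro i k hik
    rw [map_apply, hoff i k hik, ← ngonWeight_neg, neg_sub,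
      (ngonWeight_periodic N).apply_val_fin_sub]
  · intro i
    simp only [map_apply]
    rw [← Complex.ofReal_sum, ← add_sum_erase _ _ (mem_univ i), hdiag i, neg_add_cancel,
      Complex.ofReal_zero]

end

theorem ngonSymbol_eq (N j : ℕ) (hN : 3 ≤ N) (hj : j < N) :
    ngonSymbol N j = ngonRatioSum N j / 2
      - N / 2 * ((if j = 1 then 1 else 0) + (if j = N - 1 then 1 else 0)) := by
  have : NeZero N := ⟨by omega⟩
  have hterm : ∀ θ φ : ℝ, (-cos θ - 1 / (2 - 2 * cos θ)) * (cos φ - 1)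
      = cos θ - (cos (φ - θ) + cos (φ + θ)) / 2 + (1 - cos φ) / (1 - cos θ) / 2 := by
    intro θ φ
    rw [cos_sub, cos_add, show 2 - 2 * cos θ = (1 - cos θ) * 2 by ring, one_div, mul_inv]
    ring
  have hsub : ∀ m : ℝ,
      2 * π * j * m / N - 2 * π * m / N = 2 * π * (((j : ℤ) - 1 : ℤ) : ℝ) * m / N := by
    intro m; push_cast; ring
  have hadd : ∀ m : ℝ,
      2 * π * j * m / N + 2 * π * m / N = 2 * π * (((j : ℤ) + 1 : ℤ) : ℝ) * m / N := by
    intro m; push_cast; ring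
  have hone := sum_fin_cos_two_pi_int_mul_div N 1
  have hdvd_one : (N : ℤ) ∣ 1 ↔ False := by norm_cast; simp; omega
  have hdvd_sub : (N : ℤ) ∣ (j : ℤ) - 1 ↔ j = 1 := by
    rw [Int.dvd_sub_iff_eq_of_abs_sub_lt (abs_lt.2 ⟨by omega, by omega⟩)]; omega
  have hdvd_add : (N : ℤ) ∣ (j : ℤ) + 1 ↔ j = N - 1 := by
    rw [← dvd_sub_self_right,
      Int.dvd_sub_iff_eq_of_abs_sub_lt (abs_lt.2 ⟨by omega, by omega⟩)]
    omega
  simp only [Int.cast_one, mul_one, hdvd_one, if_false] at hone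
  simp only [ngonSymbol, ngonWeight, hterm, hsub, hadd, sum_add_distrib, sum_sub_distrib,
    ← sum_div, hone, sum_fin_cos_two_pi_int_mul_div, hdvd_sub, hdvd_add,
    sum_fin_ratio_eq_ngonRatioSum]
  split_ifs <;> ring

theorem ngonRatioSum_zero (N : ℕ) : ngonRatioSum N 0 = 0 := by
  simp [ngonRatioSum]

theorem ngonRatioSum_eq_of_cos_eq {N j : ℕ} (hN : 0 < N)
    (h : ∀ k : ℕ, cos (2 * π * j * k / N) = cos (2 * π * k / N)) :
    ngonRatioSum N j = N - 1 := by
  have hterm : ∀ k ∈ Icc 1 (N - 1),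
      (1 - cos (2 * π * j * k / N)) / (1 - cos (2 * π * k / N)) = 1 := by
    intro k hk
    rw [mem_Icc] at hk
    rw [h, div_self (sub_ne_zero.2 (cos_two_pi_mul_div_lt_one (N := N) (by omega) (by omega)).ne')]
  rw [ngonRatioSum, sum_congr rfl hterm, sum_const, Nat.card_Icc, nsmul_one,
    show N - 1 + 1 - 1 = N - 1 by omega, Nat.cast_pred hN]

theorem ngonRatioSum_one {N : ℕ} (hN : 0 < N) : ngonRatioSum N 1 = N - 1 :=
  ngonRatioSum_eq_of_cos_eq hN fun k => by rw [Nat.cast_one, mul_one]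

theorem ngonRatioSum_sub_one {N : ℕ} (hN : 0 < N) : ngonRatioSum N (N - 1) = N - 1 := by
  refine ngonRatioSum_eq_of_cos_eq hN fun k => ?_
  have hN' : (N : ℝ) ≠ 0 := by positivity
  rw [Nat.cast_pred hN, show 2 * π * (N - 1) * k / N = k * (2 * π) - 2 * π * k / N by
    field_simp, cos_nat_mul_two_pi_sub]

theorem ngonRatioSum_pos {N j : ℕ} (hj : 0 < j) (hjN : j < N) : 0 < ngonRatioSum N j := by
  refine sum_pos' (fun k hk => div_nonneg (by linarith [cos_le_one (2 * π * j * k / N)]) ?_)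
    ⟨1, mem_Icc.2 ⟨le_rfl, by omega⟩, ?_⟩
  · rw [mem_Icc] at hk
    linarith [cos_two_pi_mul_div_lt_one (N := N) (k := k) (by omega) (by omega)]
  · rw [Nat.cast_one, mul_one]
    exact div_pos (by linarith [cos_two_pi_mul_div_lt_one hj hjN])
      (by linarith [cos_two_pi_mul_div_lt_one (N := N) one_pos (by omega)])

theorem card_filter_of_ngon_spectrum (N : ℕ) (hN : 3 ≤ N) (lam : Fin N → ℝ)
    (hlam0 : ∀ j : Fin N, (j : ℕ) = 0 → lam j = 0)
    (hlam1 : ∀ j : Fin N, ((j : ℕ) = 1 ∨ (j : ℕ) = N - 1) → lam j = -1/2)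
    (hpos : ∀ j : Fin N, 2 ≤ (j : ℕ) → (j : ℕ) ≤ N - 2 → 0 < lam j) :
    #{j | lam j = 0} = 1 ∧ #{j | lam j = -1/2} = 2 ∧ #{j | 0 < lam j} = N - 3 := by
  have hclass : ∀ j : Fin N, (lam j = 0 ↔ (j : ℕ) = 0)
      ∧ (lam j = -1/2 ↔ ((j : ℕ) = 1 ∨ (j : ℕ) = N - 1))
      ∧ (0 < lam j ↔ (2 ≤ (j : ℕ) ∧ (j : ℕ) ≤ N - 2)) := by
    intro j
    rcases (by omega : (j : ℕ) = 0 ∨ ((j : ℕ) = 1 ∨ (j : ℕ) = N - 1)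
        ∨ (2 ≤ (j : ℕ) ∧ (j : ℕ) ≤ N - 2)) with h | h | h
    · rw [hlam0 j h]; norm_num; omega
    · rw [hlam1 j h]; norm_num; omega
    · have := hpos j h.1 h.2
      refine ⟨⟨fun h' => ?_, fun h' => ?_⟩, ⟨fun h' => ?_, fun h' => ?_⟩,
        iff_of_true this h⟩ <;> first | linarith | omega
  rw [filter_congr fun j _ => (hclass j).1, filter_congr fun j _ => (hclass j).2.1,
    filter_congr fun j _ => (hclass j).2.2, card_filter_univ_fin N (· = 0),
    card_filter_univ_fin N (fun n => n = 1 ∨ n = N - 1),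
    card_filter_univ_fin N (fun n => 2 ≤ n ∧ n ≤ N - 2)]
  refine ⟨?_, ?_, ?_⟩
  · rw [show {n ∈ range N | n = 0} = {0} by
      ext; simp only [mem_filter, mem_range, mem_singleton]; omega, card_singleton]
  · rw [show {n ∈ range N | n = 1 ∨ n = N - 1} = {1, N - 1} by
      ext; simp only [mem_filter, mem_range, mem_insert, mem_singleton]; omega,
      card_pair (by omega)]
  · rw [show {n ∈ range N | 2 ≤ n ∧ n ≤ N - 2} = Icc 2 (N - 2) by
      ext; simp only [mem_filter, mem_range, mem_Icc]; omega, Nat.card_Icc]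
    omega

theorem ngon_hessian_eigenvectors
    (N : ℕ) (hN : 4 ≤ N) (H : Matrix (Fin N) (Fin N) ℝ)
    (hoff : ∀ i j : Fin N, i ≠ j →
      H i j = - Real.cos (2 * π * (((i : ℕ) : ℝ) - ((j : ℕ) : ℝ)) / N)
        - 1 / (2 - 2 * Real.cos (2 * π * (((i : ℕ) : ℝ) - ((j : ℕ) : ℝ)) / N)))
    (hdiag : ∀ i : Fin N, H i i = - ∑ j ∈ Finset.univ.erase i, H i j)
    (b : ℕ → ℝ)
    (hb : ∀ j : ℕ, b j = (1 / 2) * ∑ k ∈ Finset.Icc 1 (N - 1),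
      (1 - Real.cos (2 * π * j * k / N)) / (1 - Real.cos (2 * π * k / N)))
    (lam : Fin N → ℝ)
    (hlam0 : ∀ j : Fin N, (j : ℕ) = 0 → lam j = 0)
    (hlam1 : ∀ j : Fin N, ((j : ℕ) = 1 ∨ (j : ℕ) = N - 1) → lam j = -1/2)
    (hlamb : ∀ j : Fin N, 2 ≤ (j : ℕ) → (j : ℕ) ≤ N - 2 → lam j = b j)
    (v : Fin N → Fin N → ℂ)
    (hv : ∀ j k : Fin N, v j k =
      Complex.exp (2 * (π : ℂ) * Complex.I * ((j : ℕ) : ℂ) * ((k : ℕ) : ℂ) / N)) :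
    (∀ j : Fin N,
      (H.map (fun x : ℝ => (x : ℂ))).mulVec (v j) = ((lam j : ℝ) : ℂ) • v j) ∧
    (∀ j : Fin N, 2 ≤ (j : ℕ) → (j : ℕ) ≤ N - 2 → 0 < lam j) ∧
    (Finset.univ.filter (fun j : Fin N => lam j = 0)).card = 1 ∧
    (Finset.univ.filter (fun j : Fin N => lam j = -1/2)).card = 2 ∧
    (Finset.univ.filter (fun j : Fin N => 0 < lam j)).card = N - 3 := by
  have : NeZero N := ⟨by omega⟩
  have hbj : ∀ j, b j = ngonRatioSum N j / 2 := fun j => by rw [hb, ngonRatioSum]; ring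
  have hpos : ∀ j : Fin N, 2 ≤ (j : ℕ) → (j : ℕ) ≤ N - 2 → 0 < lam j := by
    intro j h2 hj2
    rw [hlamb j h2 hj2, hbj]
    exact half_pos (ngonRatioSum_pos (by omega) j.isLt)
  have hsymbol : ∀ j : Fin N, lam j = ngonSymbol N j := by
    intro j
    rw [ngonSymbol_eq N j (by omega) j.isLt]
    rcases (by omega : (j : ℕ) = 0 ∨ (j : ℕ) = 1 ∨ (j : ℕ) = N - 1
        ∨ (2 ≤ (j : ℕ) ∧ (j : ℕ) ≤ N - 2)) with h | h | h | h
    · rw [hlam0 j h, h, ngonRatioSum_zero, if_neg (by omega), if_neg (by omega)]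
      ring
    · rw [hlam1 j (.inl h), h, ngonRatioSum_one (by omega), if_pos rfl, if_neg (by omega)]
      ring
    · rw [hlam1 j (.inr h), h, ngonRatioSum_sub_one (by omega), if_neg (by omega), if_pos rfl]
      ring
    · rw [hlamb j h.1 h.2, hbj, if_neg (by omega), if_neg (by omega)]
      ring
  refine ⟨fun j => ?_, hpos, card_filter_of_ngon_spectrum N (by omega) lam hlam0 hlam1 hpos⟩
  rw [hsymbol j, show v j = ngonFourierVec N j from funext (hv j)]
  exact ngon_hessian_mulVec N H hoff hdiag j
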